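/- arXiv:1305.1491 — 2 statements merged into one kernel-verified Lean document; each statement's English description precedes it below -/
import Mathlib

section
/- The map Π given in coordinates by Π(ζ, Z) = (Z₁ + iZ₂ + cζ(1+Z₃)) / (c·ζ̄·(Z₁+iZ₂) + 1 + Z₃), applied to a unit vector Z = (Z₁,Z₂,Z₃) ∈ ℝ³ with Z₃ > 0 and a point ζ with c|ζ| < 1, takes values in the open unit disk. -/
/-!
With `a = c ζ`, `w = Z₁ + i Z₂` and `t = 1 + Z₃`, the map is `(w + a t) / (conj a * w + t)`, and
`‖conj a * w + t‖² - ‖w + a t‖² = (1 - ‖a‖²) (t² - ‖w‖²)`: the cross terms `2 t Re (conj a * w)`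
cancel. Both factors are positive, since `‖a‖ < 1` and `‖w‖² = 1 - Z₃² < (1 + Z₃)²`.
-/

open Complex ComplexConjugate

theorem sq_norm_conj_mul_add_ofReal_sub_sq_norm_add_mul_ofReal (a w : ℂ) (t : ℝ) :
    ‖conj a * w + t‖ ^ 2 - ‖w + a * t‖ ^ 2 = (1 - ‖a‖ ^ 2) * (t ^ 2 - ‖w‖ ^ 2) := by
  simp only [Complex.sq_norm, normSq_add, map_mul, normSq_conj, normSq_ofReal, conj_ofReal]
  rw [show w * (conj a * t) = conj a * w * t by ring]
  ring

theorem norm_add_mul_ofReal_lt_norm_conj_mul_add_ofReal {a w : ℂ} {t : ℝ} (ha : ‖a‖ < 1)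
    (hw : ‖w‖ < t) : ‖w + a * t‖ < ‖conj a * w + t‖ := by
  have hpos : 0 < (1 - ‖a‖ ^ 2) * (t ^ 2 - ‖w‖ ^ 2) := by
    apply mul_pos <;> nlinarith [norm_nonneg a, norm_nonneg w]
  have hdiff := sq_norm_conj_mul_add_ofReal_sub_sq_norm_add_mul_ofReal a w t
  exact lt_of_pow_lt_pow_left₀ 2 (norm_nonneg _) (by linarith)

theorem conj_mul_add_ofReal_ne_zero_and_norm_div_lt_one {a w : ℂ} {t : ℝ} (ha : ‖a‖ < 1)
    (hw : ‖w‖ < t) :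
    conj a * w + t ≠ 0 ∧ ‖(w + a * t) / (conj a * w + t)‖ < 1 := by
  have hlt := norm_add_mul_ofReal_lt_norm_conj_mul_add_ofReal ha hw
  have hD : conj a * w + t ≠ 0 := norm_pos_iff.mp ((norm_nonneg _).trans_lt hlt)
  exact ⟨hD, by rwa [norm_div, div_lt_one (norm_pos_iff.mpr hD)]⟩

theorem norm_add_mul_I_lt_one_add {Z₁ Z₂ Z₃ : ℝ} (hZ : Z₁ ^ 2 + Z₂ ^ 2 + Z₃ ^ 2 = 1)
    (hZ₃ : 0 < Z₃) : ‖(Z₁ + Z₂ * I : ℂ)‖ < 1 + Z₃ := by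
  refine lt_of_pow_lt_pow_left₀ 2 (by positivity) ?_
  rw [Complex.sq_norm, normSq_add_mul_I]
  nlinarith

theorem gaussMap_upper_hemisphere_in_disk (c : ℝ) (hc : 0 < c) (ζ : ℂ)
    (hζ : c * ‖ζ‖ < 1) (Z₁ Z₂ Z₃ : ℝ)
    (hZ : Z₁ ^ 2 + Z₂ ^ 2 + Z₃ ^ 2 = 1) (hZ₃ : 0 < Z₃) :
    (c : ℂ) * (starRingEnd ℂ) ζ * (Z₁ + Z₂ * Complex.I) + 1 + Z₃ ≠ 0 ∧
    ‖(((Z₁ + Z₂ * Complex.I) + c * ζ * (1 + Z₃)) /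
      ((c : ℂ) * (starRingEnd ℂ) ζ * (Z₁ + Z₂ * Complex.I) + 1 + Z₃) : ℂ)‖ < 1 := by
  have ha : ‖(c * ζ : ℂ)‖ < 1 := by
    rwa [norm_mul, norm_real, Real.norm_of_nonneg hc.le]
  have hdisk := conj_mul_add_ofReal_ne_zero_and_norm_div_lt_one ha (norm_add_mul_I_lt_one_add hZ hZ₃)
  simpa only [map_mul, conj_ofReal, ofReal_add, ofReal_one, add_assoc] using hdisk
end

section
/- The rotation formula for Π: if r(Z) = (Z₁, −Z₂, −Z₃) and ζ is replaced by ζ̄, then Π(ζ̄, r(Z)) = 1/Π(ζ, Z) whenever Π(ζ,Z) ≠ 0 and denominators are nonzero. -/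
open Complex

/-- With `w w' = 1 - t²` (on the sphere, `w = Z₁ + i Z₂`, `w' = w̄`, `t = Z₃`), the cross-multiplied
rotation formula holds: the two sides differ by `(1 - a a') (w w' - (1 - t²))`. -/
theorem mul_eq_mul_of_mul_eq_one_sub_sq {R : Type*} [CommRing R] {w w' t : R} (a a' : R)
    (h : w * w' = 1 - t ^ 2) :
    (w' + a' * (1 - t)) * (w + a * (1 + t)) = (a * w' + 1 - t) * (a' * w + 1 + t) := by
  linear_combination (1 - a * a') * h

theorem ofReal_add_mul_I_mul_sub_mul_I (x y : ℝ) :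
    ((x : ℂ) + y * I) * (x + -y * I) = x ^ 2 + y ^ 2 := by
  linear_combination (-(y : ℂ) ^ 2) * I_sq

theorem piMap_rotation_formula_general (c : ℝ) (ζ : ℂ) (Z₁ Z₂ Z₃ : ℝ)
    (hZ : Z₁ ^ 2 + Z₂ ^ 2 + Z₃ ^ 2 = 1)
    (hden₂ : (c : ℂ) * ζ * ((Z₁ : ℂ) + (-Z₂ : ℝ) * Complex.I) + 1 + ((-Z₃ : ℝ) : ℂ) ≠ 0)
    (hPi : ((Z₁ : ℂ) + Z₂ * Complex.I + c * ζ * (1 + Z₃)) /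
      ((c : ℂ) * (starRingEnd ℂ) ζ * ((Z₁ : ℂ) + Z₂ * Complex.I) + 1 + Z₃) ≠ 0) :
    ((Z₁ : ℂ) + (-Z₂ : ℝ) * Complex.I + c * (starRingEnd ℂ) ζ * (1 + ((-Z₃ : ℝ) : ℂ))) /
        ((c : ℂ) * ζ * ((Z₁ : ℂ) + (-Z₂ : ℝ) * Complex.I) + 1 + ((-Z₃ : ℝ) : ℂ))
      = 1 / (((Z₁ : ℂ) + Z₂ * Complex.I + c * ζ * (1 + Z₃)) /
          ((c : ℂ) * (starRingEnd ℂ) ζ * ((Z₁ : ℂ) + Z₂ * Complex.I) + 1 + Z₃)) := by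
  have hnum := (div_ne_zero_iff.mp hPi).1
  have hw : ((Z₁ : ℂ) + Z₂ * I) * (Z₁ + -Z₂ * I) = 1 - (Z₃ : ℂ) ^ 2 := by
    rw [ofReal_add_mul_I_mul_sub_mul_I]
    exact_mod_cast (eq_sub_of_add_eq hZ)
  rw [one_div_div, div_eq_div_iff hden₂ hnum]
  push_cast
  linear_combination mul_eq_mul_of_mul_eq_one_sub_sq (c * ζ) (c * starRingEnd ℂ ζ) hw

theorem piMap_rotation_formula (c : ℝ) (hc : 0 < c) (ζ : ℂ)
    (hζ : c * ‖ζ‖ < 1) (Z₁ Z₂ Z₃ : ℝ)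
    (hZ : Z₁ ^ 2 + Z₂ ^ 2 + Z₃ ^ 2 = 1)
    (hden₁ : (c : ℂ) * (starRingEnd ℂ) ζ * ((Z₁ : ℂ) + Z₂ * Complex.I) + 1 + Z₃ ≠ 0)
    (hden₂ : (c : ℂ) * ζ * ((Z₁ : ℂ) + (-Z₂ : ℝ) * Complex.I) + 1 + ((-Z₃ : ℝ) : ℂ) ≠ 0)
    (hPi : ((Z₁ : ℂ) + Z₂ * Complex.I + c * ζ * (1 + Z₃)) /
      ((c : ℂ) * (starRingEnd ℂ) ζ * ((Z₁ : ℂ) + Z₂ * Complex.I) + 1 + Z₃) ≠ 0) :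
    ((Z₁ : ℂ) + (-Z₂ : ℝ) * Complex.I + c * (starRingEnd ℂ) ζ * (1 + ((-Z₃ : ℝ) : ℂ))) /
        ((c : ℂ) * ζ * ((Z₁ : ℂ) + (-Z₂ : ℝ) * Complex.I) + 1 + ((-Z₃ : ℝ) : ℂ))
      = 1 / (((Z₁ : ℂ) + Z₂ * Complex.I + c * ζ * (1 + Z₃)) /
          ((c : ℂ) * (starRingEnd ℂ) ζ * ((Z₁ : ℂ) + Z₂ * Complex.I) + 1 + Z₃)) :=
  piMap_rotation_formula_general c ζ Z₁ Z₂ Z₃ hZ hden₂ hPi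
end
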